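/- Fix h > 0, g > 0, E₂₂ > 0, a positive integer n, and γ ≠ 0. If 0 ≤ λ*_{n,−}(γ)/γ ≤ h, then necessarily γ < 0, and the critical line Y₀ := h − λ*_{n,−}(γ)/γ satisfies 0 ≤ Y₀ < h; i.e., the critical layer of the laminar flow corresponding to λ*_{n,−}(γ) lies strictly below the free surface Y = h. -/
import Mathlib

/-- `T h n = tanh (n h) / n`. -/
noncomputable def T (h : ℝ) (n : ℕ) : ℝ := Real.tanh (n * h) / n

/-- `λ*_{n,−}(γ)`. -/
noncomputable def lamMinus (h g E22 γ : ℝ) (n : ℕ) : ℝ :=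
  γ / 2 * T h n - Real.sqrt (γ ^ 2 * (T h n) ^ 2 / 4 + (g + n ^ 4 * E22 / 2) * T h n)

/-- If `0 ≤ λ*_{n,−}(γ)/γ ≤ h` (with `γ ≠ 0`), then necessarily `γ < 0`, and
the critical line `Y₀ := h − λ*_{n,−}(γ)/γ` satisfies `0 ≤ Y₀ < h`, i.e. it
lies strictly below the free surface `Y = h`. -/
theorem critical_layer_below_surface (h g E22 : ℝ) (hh : 0 < h) (hg : 0 < g)
    (hE : 0 < E22) (n : ℕ) (hn : 0 < n) (γ : ℝ) (hγ : γ ≠ 0)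
    (hcrit : 0 ≤ lamMinus h g E22 γ n / γ ∧ lamMinus h g E22 γ n / γ ≤ h) :
    γ < 0 ∧ 0 ≤ h - lamMinus h g E22 γ n / γ ∧
      h - lamMinus h g E22 γ n / γ < h := by
  have hnR : (0:ℝ) < n := Nat.cast_pos.mpr hn
  have htanh : 0 < Real.tanh (n * h) := by
    have : (0:ℝ) < n * h := mul_pos hnR hh
    have hs : 0 < Real.sinh ((n:ℝ) * h) := Real.sinh_pos_iff.mpr this
    have hc := Real.cosh_pos (n * h : ℝ)
    rw [Real.tanh_eq_sinh_div_cosh]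
    positivity
  have hT : 0 < T h n := div_pos htanh hnR
  have hc : 0 < (g + (n:ℝ) ^ 4 * E22 / 2) * T h n := by positivity
  have hlam : lamMinus h g E22 γ n < 0 := by
    unfold lamMinus
    have h1 : γ / 2 * T h n ≤ Real.sqrt (γ ^ 2 * (T h n) ^ 2 / 4) := by
      rw [show γ ^ 2 * (T h n) ^ 2 / 4 = (γ / 2 * T h n) ^ 2 by ring,
        Real.sqrt_sq_eq_abs]
      exact le_abs_self _
    have h2 : Real.sqrt (γ ^ 2 * (T h n) ^ 2 / 4) <
        Real.sqrt (γ ^ 2 * (T h n) ^ 2 / 4 + (g + (n:ℝ) ^ 4 * E22 / 2) * T h n) :=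
      Real.sqrt_lt_sqrt (by positivity) (by linarith)
    linarith
  obtain ⟨h0, h1⟩ := hcrit
  have hγneg : γ < 0 := by
    rcases lt_or_gt_of_ne hγ with hl | hr
    · exact hl
    · exfalso
      have := div_neg_of_neg_of_pos hlam hr
      linarith
  have hpos : 0 < lamMinus h g E22 γ n / γ := div_pos_of_neg_of_neg hlam hγneg
  exact ⟨hγneg, by linarith, by linarith⟩
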